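/- Let P be a partition of a set X with |P| ≥ 7, and let S ∈ P be a fixed element. Then there is a weak selection σ for P such that S is the ≤_σ-maximal element of P (i.e., P ≤_σ S for every P ∈ P) and, for every choice of weak selections h_P for each P ∈ P, every member of P is open in the selection topology T_{σ*h} on X. -/

import Mathlib

open Topology

/-- A weak selection for `X`: a choice function on (unordered) pairs,
encoded as a symmetric map `X → X → X` picking one of its two arguments. -/
structure WeakSelection (X : Type*) where
  toFun : X → X → X
  mem_pair : ∀ x y, toFun x y = x ∨ toFun x y = y
  comm : ∀ x y, toFun x y = toFun y x

namespace WeakSelection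

variable {X : Type*}

/-- `x ≤_σ y` iff `σ {x, y} = x`. -/
def le (σ : WeakSelection X) (x y : X) : Prop := σ.toFun x y = x

/-- `x <_σ y` iff `x ≤_σ y` and `x ≠ y`. -/
def lt (σ : WeakSelection X) (x y : X) : Prop := σ.le x y ∧ x ≠ y

/-- The selection topology `T_σ`, generated by the `≤_σ`-open intervals. -/
def selTop (σ : WeakSelection X) : TopologicalSpace X :=
  TopologicalSpace.generateFrom
    {s : Set X | ∃ a : X, s = {y | σ.lt y a} ∨ s = {y | σ.lt a y}}

/-- Continuity of a weak selection on a topological space. -/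
def Continuous [TopologicalSpace X] (σ : WeakSelection X) : Prop :=
  ∀ x y : X, σ.lt x y → ∃ U V : Set X, IsOpen U ∧ IsOpen V ∧ x ∈ U ∧ y ∈ V ∧
    ∀ s ∈ U, ∀ t ∈ V, σ.lt s t

end WeakSelection

/-- `A <_g B` for subsets: `a <_g b` for all `a ∈ A`, `b ∈ B`. -/
def setLT {X : Type*} (g : WeakSelection X) (A B : Set X) : Prop :=
  ∀ a ∈ A, ∀ b ∈ B, g.lt a b

/-- `g` is the `P`-invariant weak selection `σ * h` determined by a weak
selection `σ` for the partition `P` (with block map `blk`) and weak selections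
`h p` for each block `p ∈ P`: on points of distinct blocks `g` is governed by
`σ`, and within a block `p` it agrees with `h p`. -/
def IsStar {X : Type*} (P : Set (Set X)) (blk : X → Set X) (hblk : ∀ x, blk x ∈ P)
    (σ : WeakSelection ↥P) (h : ∀ p : ↥P, WeakSelection ↥(p : Set X))
    (g : WeakSelection X) : Prop :=
  (∀ x y : X, blk x ≠ blk y →
      (g.lt x y ↔ σ.lt ⟨blk x, hblk x⟩ ⟨blk y, hblk y⟩)) ∧
  (∀ (p : ↥P) (x y : ↥(p : Set X)), blk ↑x = ↑p → blk ↑y = ↑p →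
      g.toFun ↑x ↑y = ↑((h p).toFun x y))

/-! Every block `q` of `P` is open in the selection topology of `σ * h` as soon as `q` is cut
out by finitely many `σ`-intervals `(a, →)`, `a ∈ F`, and `(←, b)`, `b ∈ G`, in such a way that
every other `r` is excluded strictly, i.e. `r <_σ a` or `b <_σ r` for some endpoint: replacing
each endpoint by a point of its block gives finitely many open intervals of `σ * h` whose
intersection is exactly the block `q`.

A weak selection of this kind with a prescribed maximum is obtained by adding a top element to
a suitable tournament. On `Fin m` with `m ≥ 5` we take the reversed order with every pair of
consecutive elements flipped. On an infinite set of cardinality `κ` we take two copies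
`inl i`, `inr i` of the well-order `κ.ord`, the first ordered downwards, the second upwards, with
`inl i` below `inr j` exactly when `i = j`. -/

namespace WeakSelection

variable {X : Type*}

theorem le_refl (σ : WeakSelection X) (x : X) : σ.le x x :=
  (σ.mem_pair x x).elim id id

theorem lt_asymm (σ : WeakSelection X) {x y : X} (h : σ.lt x y) : ¬σ.lt y x := fun h' =>
  h.2 (h.1.symm.trans ((σ.comm x y).trans h'.1))

theorem isOpen_Ioi (σ : WeakSelection X) (a : X) : IsOpen[σ.selTop] {y | σ.lt a y} :=
  TopologicalSpace.GenerateOpen.basic _ ⟨a, Or.inr rfl⟩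

theorem isOpen_Iio (σ : WeakSelection X) (a : X) : IsOpen[σ.selTop] {y | σ.lt y a} :=
  TopologicalSpace.GenerateOpen.basic _ ⟨a, Or.inl rfl⟩

open scoped Classical in
noncomputable def ofRel (R : X → X → Prop) (htot : ∀ x y, x ≠ y → R x y ∨ R y x)
    (hasymm : ∀ x y, R x y → ¬R y x) : WeakSelection X where
  toFun x y := if R x y then x else y
  mem_pair x y := by by_cases h : R x y <;> simp [h]
  comm x y := by
    by_cases hxy : x = y
    · rw [hxy]
    rcases htot x y hxy with h | h <;> simp [h, hasymm _ _ h]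

theorem lt_ofRel {R : X → X → Prop} (htot : ∀ x y, x ≠ y → R x y ∨ R y x)
    (hasymm : ∀ x y, R x y → ¬R y x) (x y : X) : (ofRel R htot hasymm).lt x y ↔ R x y := by
  by_cases h : R x y
  · simp only [lt, le, ofRel, h, if_true, true_and, iff_true]
    rintro rfl
    exact hasymm x x h h
  · simp only [lt, le, ofRel, h, if_false, iff_false]
    exact fun h' => h'.2 h'.1.symm

end WeakSelection

section Tournament

variable {C : Type*}

def IsFinitelyIsolated (R : C → C → Prop) (q : C) : Prop :=
  ∃ F G : Finset C, (∀ a ∈ F, R a q) ∧ (∀ b ∈ G, R q b) ∧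
    ∀ r, r ≠ q → (∃ a ∈ F, R r a) ∨ ∃ b ∈ G, R b r

theorem IsFinitelyIsolated.comap {T : Type*} {R : C → C → Prop} (e : T ≃ C) {q : T}
    (h : IsFinitelyIsolated R (e q)) : IsFinitelyIsolated (fun x y => R (e x) (e y)) q := by
  obtain ⟨F, G, hF, hG, hsep⟩ := h
  refine ⟨F.map e.symm.toEmbedding, G.map e.symm.toEmbedding, fun a ha => ?_, fun b hb => ?_,
    fun r hr => ?_⟩
  · rw [Finset.mem_map_equiv, Equiv.symm_symm] at ha
    exact hF _ ha
  · rw [Finset.mem_map_equiv, Equiv.symm_symm] at hb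
    exact hG _ hb
  · rcases hsep (e r) (e.injective.ne hr) with ⟨a, ha, hra⟩ | ⟨b, hb, hbr⟩
    · exact Or.inl ⟨e.symm a, Finset.mem_map_of_mem _ ha, by simpa using hra⟩
    · exact Or.inr ⟨e.symm b, Finset.mem_map_of_mem _ hb, by simpa using hbr⟩

theorem isFinitelyIsolated_of_finite [Finite C] {R : C → C → Prop} {q : C}
    (h : ∀ r, r ≠ q → ∃ c, (R c q ∧ R r c) ∨ (R q c ∧ R c r)) : IsFinitelyIsolated R q := by
  classical
  have := Fintype.ofFinite C
  refine ⟨Finset.univ.filter (R · q), Finset.univ.filter (R q ·), by simp, by simp, fun r hr => ?_⟩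
  obtain ⟨c, hc | hc⟩ := h r hr
  · exact Or.inl ⟨c, by simpa using hc.1, hc.2⟩
  · exact Or.inr ⟨c, by simpa using hc.1, hc.2⟩

def addTop (R : C → C → Prop) : Option C → Option C → Prop
  | some a, some b => R a b
  | some _, none => True
  | none, _ => False

theorem addTop_total {R : C → C → Prop} (htot : ∀ x y, x ≠ y → R x y ∨ R y x) :
    ∀ x y, x ≠ y → addTop R x y ∨ addTop R y x
  | none, none, h => absurd rfl h
  | none, some _, _ => Or.inr trivial
  | some _, none, _ => Or.inl trivial
  | some a, some b, h => htot a b fun hab => h (congrArg some hab)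

theorem addTop_asymm {R : C → C → Prop} (hasymm : ∀ x y, R x y → ¬R y x) :
    ∀ x y, addTop R x y → ¬addTop R y x
  | none, _, h, _ | some _, none, _, h => h
  | some a, some b, h, h' => hasymm a b h h'

theorem isFinitelyIsolated_addTop {R : C → C → Prop}
    (hcover : ∃ F : Finset C, ∀ c, ∃ a ∈ F, R c a) (hiso : ∀ c, IsFinitelyIsolated R c) :
    ∀ q, IsFinitelyIsolated (addTop R) q := by
  classical
  obtain ⟨F₀, hF₀⟩ := hcover
  rintro (_ | c)
  · refine ⟨F₀.map .some, ∅, by simp [addTop], by simp, ?_⟩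
    rintro (_ | r) hr
    · exact absurd rfl hr
    · simpa [addTop] using hF₀ r
  · obtain ⟨F, G, hF, hG, hsep⟩ := hiso c
    obtain ⟨d, -, hd⟩ := hF₀ c
    refine ⟨F.map .some, (insert d G).map .some, by simpa [addTop] using hF,
      by simpa [addTop, hd] using hG, ?_⟩
    rintro (_ | r) hr
    · exact Or.inr ⟨some d, by simp, trivial⟩
    · rcases hsep r (by simpa using hr) with ⟨a, ha, hra⟩ | ⟨b, hb, hbr⟩
      · exact Or.inl ⟨some a, by simpa using ha, hra⟩
      · exact Or.inr ⟨some b, by simp [hb], hbr⟩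

def finTournament (m : ℕ) (u v : Fin m) : Prop :=
  v.val = u.val + 1 ∨ v.val + 2 ≤ u.val

namespace finTournament

variable {m : ℕ}

theorem total (u v : Fin m) (h : u ≠ v) : finTournament m u v ∨ finTournament m v u := by
  rw [Ne, Fin.ext_iff] at h
  unfold finTournament
  omega

theorem asymm (u v : Fin m) : finTournament m u v → ¬finTournament m v u := by
  unfold finTournament
  omega

theorem exists_gt (hm : 3 ≤ m) (u : Fin m) : ∃ v, finTournament m u v := by
  by_cases hu : u.val + 1 < m
  · exact ⟨⟨u.val + 1, hu⟩, Or.inl rfl⟩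
  · exact ⟨⟨0, by omega⟩, Or.inr (by simp only; omega)⟩

theorem exists_path_of_lt (hm : 5 ≤ m) {s t : Fin m} (hts : t < s) :
    ∃ y, finTournament m s y ∧ finTournament m y t := by
  rw [Fin.lt_def] at hts
  unfold finTournament
  by_cases hs : s.val + 1 < m
  · exact ⟨⟨s.val + 1, hs⟩, Or.inl rfl, by simp only; omega⟩
  by_cases ht : 1 ≤ t.val
  · exact ⟨⟨t.val - 1, by omega⟩, by simp only; omega⟩
  · exact ⟨⟨2, by omega⟩, by simp only; omega⟩

theorem isFinitelyIsolated (hm : 5 ≤ m) (q : Fin m) :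
    IsFinitelyIsolated (finTournament m) q := by
  refine isFinitelyIsolated_of_finite fun r hr => ?_
  rcases lt_or_gt_of_ne hr with hrq | hqr
  · obtain ⟨y, hqy, hyr⟩ := exists_path_of_lt hm hrq
    exact ⟨y, Or.inr ⟨hqy, hyr⟩⟩
  · obtain ⟨y, hry, hyq⟩ := exists_path_of_lt hm hqr
    exact ⟨y, Or.inl ⟨hyq, hry⟩⟩

end finTournament

def sumTournament (I : Type*) [LinearOrder I] : I ⊕ I → I ⊕ I → Prop
  | .inl i, .inl j => j < i
  | .inl i, .inr j => i = j
  | .inr i, .inl j => i ≠ j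
  | .inr i, .inr j => i < j

namespace sumTournament

variable {I : Type*} [LinearOrder I]

theorem total (u v : I ⊕ I) (h : u ≠ v) : sumTournament I u v ∨ sumTournament I v u := by
  rcases u with i | i <;> rcases v with j | j <;> simp only [sumTournament] <;>
    simp only [ne_eq, Sum.inl.injEq, Sum.inr.injEq] at h <;> grind

theorem asymm (u v : I ⊕ I) : sumTournament I u v → ¬sumTournament I v u := by
  rcases u with i | i <;> rcases v with j | j <;> simp only [sumTournament] <;> grind

theorem exists_cover [OrderBot I] [NoMaxOrder I] :
    ∃ F : Finset (I ⊕ I), ∀ c, ∃ a ∈ F, sumTournament I c a := by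
  classical
  obtain ⟨j, hj⟩ := exists_gt (⊥ : I)
  refine ⟨{.inl ⊥, .inr ⊥, .inl j}, ?_⟩
  rintro (i | i) <;> rcases eq_bot_or_bot_lt i with rfl | hi
  · exact ⟨.inr ⊥, by simp, rfl⟩
  · exact ⟨.inl ⊥, by simp, hi⟩
  · exact ⟨.inl j, by simp, hj.ne⟩
  · exact ⟨.inl ⊥, by simp, hi.ne'⟩

theorem isFinitelyIsolated [NoMaxOrder I] (q : I ⊕ I) :
    IsFinitelyIsolated (sumTournament I) q := by
  rcases q with i | i <;> obtain ⟨j, hij⟩ := exists_gt i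
  · refine ⟨{.inr j}, {.inr i}, by simpa [sumTournament] using hij.ne', by simp [sumTournament], ?_⟩
    rintro (m | m) hm
    · exact Or.inr ⟨.inr i, by simp, by simpa [sumTournament, eq_comm] using hm⟩
    · by_cases hmj : m < j
      · exact Or.inl ⟨.inr j, by simp, hmj⟩
      · exact Or.inr ⟨.inr i, by simp, hij.trans_le (not_lt.1 hmj)⟩
  · refine ⟨{.inl i}, {.inl j}, by simp [sumTournament], by simpa [sumTournament] using hij.ne, ?_⟩
    rintro (m | m) hm
    · by_cases hmi : i < m
      · exact Or.inl ⟨.inl i, by simp, hmi⟩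
      · exact Or.inr ⟨.inl j, by simp, (not_lt.1 hmi).trans_lt hij⟩
    · exact Or.inl ⟨.inl i, by simp, by simpa [sumTournament] using hm⟩

end sumTournament

end Tournament

theorem exists_weakSelection_of_equiv_option {T C : Type*} {R : C → C → Prop}
    (htot : ∀ x y, x ≠ y → R x y ∨ R y x) (hasymm : ∀ x y, R x y → ¬R y x)
    (hcover : ∃ F : Finset C, ∀ c, ∃ a ∈ F, R c a) (hiso : ∀ c, IsFinitelyIsolated R c)
    (e : T ≃ Option C) (s₀ : T) :
    ∃ σ : WeakSelection T, (∀ p, σ.le p s₀) ∧ ∀ q, IsFinitelyIsolated σ.lt q := by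
  classical
  set e' := e.trans (Equiv.swap (e s₀) none)
  have he' : e' s₀ = none := by simp [e']
  set R' : T → T → Prop := fun x y => addTop R (e' x) (e' y)
  have htot' : ∀ x y, x ≠ y → R' x y ∨ R' y x := fun x y hxy =>
    addTop_total htot (e' x) (e' y) (e'.injective.ne hxy)
  have hasymm' : ∀ x y, R' x y → ¬R' y x := fun x y => addTop_asymm hasymm (e' x) (e' y)
  set σ := WeakSelection.ofRel R' htot' hasymm'
  have hσ : σ.lt = R' := by
    funext x y
    exact propext (WeakSelection.lt_ofRel htot' hasymm' x y)
  refine ⟨σ, fun p => ?_, fun q => hσ ▸ (isFinitelyIsolated_addTop hcover hiso (e' q)).comap e'⟩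
  by_cases hp : p = s₀
  · exact hp ▸ σ.le_refl p
  · have : σ.lt p s₀ := by
      rw [hσ]
      rcases hpe : e' p with _ | a
      · exact absurd (e'.injective (hpe.trans he'.symm)) hp
      · simp only [R', hpe, he', addTop]
    exact this.1

theorem exists_weakSelection_forall_isFinitelyIsolated {T : Type*}
    (hT : 6 ≤ Cardinal.mk T) (s₀ : T) :
    ∃ σ : WeakSelection T, (∀ p, σ.le p s₀) ∧ ∀ q, IsFinitelyIsolated σ.lt q := by
  cases finite_or_infinite T with
  | inl hfin =>
    have := Fintype.ofFinite T
    obtain ⟨m, hm⟩ : ∃ m, Fintype.card T = m + 1 :=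
      Nat.exists_eq_add_one.2 (Fintype.card_pos_iff.2 ⟨s₀⟩)
    have hm5 : 5 ≤ m := by
      rw [Cardinal.mk_fintype, hm] at hT
      have : 6 ≤ m + 1 := by exact_mod_cast hT
      omega
    exact exists_weakSelection_of_equiv_option finTournament.total finTournament.asymm
      ⟨Finset.univ, fun c => by simpa using finTournament.exists_gt (by omega) c⟩
      (finTournament.isFinitelyIsolated hm5) (Fintype.equivOfCardEq (by simp [hm])) s₀
  | inr hinf =>
    have hκ : Cardinal.aleph0 ≤ Cardinal.mk T := Cardinal.infinite_iff.1 hinf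
    let I := (Cardinal.mk T).ord.ToType
    have hI : Cardinal.mk I = Cardinal.mk T := Cardinal.mk_ord_toType _
    have : Nonempty I := Cardinal.mk_ne_zero_iff.1 (hI ▸ (Cardinal.aleph0_pos.trans_le hκ).ne')
    let := WellFoundedLT.toOrderBot I
    have := Cardinal.noMaxOrder hκ
    have e : T ≃ Option (I ⊕ I) := by
      refine (Cardinal.eq.1 ?_).some
      rw [Cardinal.mk_option, Cardinal.mk_sum, Cardinal.lift_id, hI, Cardinal.add_eq_self hκ,
        Cardinal.add_one_eq hκ]
    exact exists_weakSelection_of_equiv_option sumTournament.total sumTournament.asymm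
      sumTournament.exists_cover sumTournament.isFinitelyIsolated e s₀

theorem IsStar.isOpen_of_isFinitelyIsolated {X : Type*} {P : Set (Set X)} {blk : X → Set X}
    {hblk : ∀ x, blk x ∈ P} {σ : WeakSelection ↥P} {h : ∀ p : ↥P, WeakSelection ↥(p : Set X)}
    {g : WeakSelection X} (hg : IsStar P blk hblk σ h g) (hmem : ∀ x, x ∈ blk x)
    (huniq : ∀ x, ∀ p ∈ P, x ∈ p → p = blk x) (hne : ∀ p ∈ P, Set.Nonempty p) {q : ↥P}
    (hq : IsFinitelyIsolated σ.lt q) : IsOpen[g.selTop] (q : Set X) := by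
  obtain ⟨F, G, hF, hG, hsep⟩ := hq
  let cls (x : X) : ↥P := ⟨blk x, hblk x⟩
  have hlt {x y : X} (hxy : cls x ≠ cls y) : g.lt x y ↔ σ.lt (cls x) (cls y) :=
    hg.1 x y fun h => hxy (Subtype.ext h)
  have hcls {x : X} {p : ↥P} (hx : x ∈ (p : Set X)) : cls x = p :=
    Subtype.ext (huniq x p p.2 hx).symm
  choose w hw using fun p : ↥P => hne p p.2
  have hlt_w {a : ↥P} {y : X} (hay : a ≠ cls y) :
      (g.lt (w a) y ↔ σ.lt a (cls y)) ∧ (g.lt y (w a) ↔ σ.lt (cls y) a) := by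
    have ha := hcls (hw a)
    refine ⟨(hlt ?_).trans (by rw [ha]), (hlt ?_).trans (by rw [ha])⟩ <;> rw [ha]
    exacts [hay, hay.symm]
  have hblock : (q : Set X) = (⋂ a ∈ F, {y | g.lt (w a) y}) ∩ ⋂ b ∈ G, {y | g.lt y (w b)} := by
    ext y
    simp only [Set.mem_inter_iff, Set.mem_iInter₂]
    constructor
    · intro hy
      rw [← hcls hy] at hF hG
      exact ⟨fun a ha => (hlt_w (hF a ha).2).1.2 (hF a ha),
        fun b hb => (hlt_w (hG b hb).2.symm).2.2 (hG b hb)⟩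
    · rintro ⟨hyF, hyG⟩
      by_contra hyq
      rcases hsep (cls y) fun h => hyq (h ▸ hmem y) with ⟨a, ha, hya⟩ | ⟨b, hb, hby⟩
      · exact g.lt_asymm (hyF a ha) ((hlt_w hya.2.symm).2.2 hya)
      · exact g.lt_asymm (hyG b hb) ((hlt_w hby.2).1.2 hby)
  let := g.selTop
  rw [hblock]
  exact (isOpen_biInter_finset fun a _ => g.isOpen_Ioi (w a)).inter
    (isOpen_biInter_finset fun b _ => g.isOpen_Iio (w b))

/-- Lemma 2.4: if `P` is a partition of `X` with `|P| ≥ 7` and `S ∈ P`, then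
`P` has a weak selection `σ` such that `S` is the `≤_σ`-maximal element of `P`
and every member of `P` is open in the selection topology of `σ * h`, for
every choice of weak selections `h p` on the blocks. -/
theorem stmt3 {X : Type*} (P : Set (Set X)) (blk : X → Set X)
    (hmem : ∀ x : X, x ∈ blk x) (hblk : ∀ x, blk x ∈ P)
    (huniq : ∀ x : X, ∀ p ∈ P, x ∈ p → p = blk x)
    (hne : ∀ p ∈ P, Set.Nonempty p)
    (hcard : 7 ≤ Cardinal.mk ↥P)
    (S : Set X) (hS : S ∈ P) :
    ∃ σ : WeakSelection ↥P,
      (∀ p : ↥P, σ.le p ⟨S, hS⟩) ∧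
      ∀ (h : ∀ p : ↥P, WeakSelection ↥(p : Set X)) (g : WeakSelection X),
        IsStar P blk hblk σ h g → ∀ p ∈ P, IsOpen[g.selTop] p := by
  obtain ⟨σ, hmax, hiso⟩ :=
    exists_weakSelection_forall_isFinitelyIsolated (le_trans (by norm_num) hcard) ⟨S, hS⟩
  exact ⟨σ, hmax, fun _ _ hg p hp => hg.isOpen_of_isFinitelyIsolated hmem huniq hne (hiso ⟨p, hp⟩)⟩
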